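/- Let σ : ℝ → ℝ be differentiable with σ(0) = 0, σ'(0) = 1, and suppose σ'(z) → a as z → −∞ and σ'(z) → b as z → +∞, with |σ'| bounded. Then for any fixed x₀ > 0, lim_{ε → +∞} E_{u ~ N(0, x₀²)} [(σ(εu)/ε)²] = ((a² + b²)/2) x₀². -/
import Mathlib

open MeasureTheory ProbabilityTheory Filter

open Real Set
open scoped NNReal ENNReal

lemma slope_tendsto_atTop' (f : ℝ → ℝ) (b : ℝ) (hf : Differentiable ℝ f)
    (hb : Tendsto (deriv f) atTop (nhds b)) :
    Tendsto (fun z => f z / z) atTop (nhds b) := by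
  have hderiv : ∀ t : ℝ, HasDerivAt (fun t => f t - b * t) (deriv f t - b) t :=
    fun t => (hf t).hasDerivAt.sub (by simpa using (hasDerivAt_id t).const_mul b)
  rw [Metric.tendsto_nhds]
  intro ε hε
  obtain ⟨M₀, hM₀⟩ := eventually_atTop.mp (Metric.tendsto_nhds.mp hb (ε/4) (by positivity))
  set M : ℝ := max M₀ 0 with hM
  have hM0 : (0:ℝ) ≤ M := le_max_right _ _
  set c : ℝ := |f M - b * M| with hc
  have hc0 : 0 ≤ c := abs_nonneg _
  have key : ∀ z ∈ Ici M, |(f z - b * z) - (f M - b * M)| ≤ ε/4 * |z - M| := by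
    intro z hz
    refine Convex.norm_image_sub_le_of_norm_deriv_le (f := fun t => f t - b * t)
      (fun t ht => (hderiv t).differentiableAt) (fun t ht => ?_)
      (convex_Ici M) (self_mem_Ici) hz
    rw [(hderiv t).deriv]
    have := hM₀ t (le_trans (le_max_left _ _) ht)
    rw [Real.dist_eq] at this
    simpa using (le_of_lt this)
  have hlim : Tendsto (fun z : ℝ => c / z) atTop (nhds 0) :=
    tendsto_const_nhds.div_atTop tendsto_id
  have hev := Metric.tendsto_nhds.mp hlim (ε/4) (by positivity)
  filter_upwards [hev, eventually_ge_atTop (max M 1)] with z hz1 hz2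
  rw [Real.dist_eq, sub_zero] at hz1
  have hzM : M ≤ z := le_trans (le_max_left _ _) hz2
  have hz0 : (0:ℝ) < z := lt_of_lt_of_le one_pos (le_trans (le_max_right _ _) hz2)
  have h1 : |f z - b * z| ≤ c + ε/4 * (z - M) := by
    have h2 := key z hzM
    rw [abs_of_nonneg (sub_nonneg.2 hzM)] at h2
    have h3 : |f z - b * z| ≤ c + |(f z - b * z) - (f M - b * M)| := by
      have h4 := abs_add_le (f M - b * M) ((f z - b * z) - (f M - b * M))
      simpa using h4
    linarith
  have hcz : c < ε/4 * z := by
    rw [abs_of_nonneg (by positivity)] at hz1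
    exact (div_lt_iff₀ hz0).mp hz1
  have heq : f z / z - b = (f z - b * z) / z := by field_simp
  rw [Real.dist_eq, heq, abs_div, abs_of_pos hz0, div_lt_iff₀ hz0]
  have habs := abs_nonneg (f z - b * z)
  nlinarith [mul_le_mul_of_nonneg_left hzM (le_of_lt (show (0:ℝ) < ε/4 by positivity))]

lemma slope_tendsto_atBot' (f : ℝ → ℝ) (a : ℝ) (hf : Differentiable ℝ f)
    (ha : Tendsto (deriv f) atBot (nhds a)) :
    Tendsto (fun z => f z / z) atBot (nhds a) := by
  have hF : Differentiable ℝ (fun z => f (-z)) := hf.comp differentiable_neg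
  have hFd : Tendsto (deriv fun z => f (-z)) atTop (nhds (-a)) := by
    have : (deriv fun z => f (-z)) = fun z => -deriv f (-z) := by
      ext z
      exact deriv_comp_neg f z
    rw [this]
    exact ((ha.comp tendsto_neg_atTop_atBot)).neg
  have h1 : Tendsto (fun z => f (-z) / z) atTop (nhds (-a)) :=
    slope_tendsto_atTop' _ _ hF hFd
  have h2 : Tendsto (fun z => f (-z) / (-z)) atTop (nhds a) := by
    have := h1.neg
    rw [neg_neg] at this
    refine this.congr fun z => by rw [div_neg]
  have h3 := h2.comp tendsto_neg_atBot_atTop (α := ℝ)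
  refine h3.congr fun z => by simp

lemma rpow_two_eq (x : ℝ) : x ^ (2:ℝ) = x ^ 2 := by
  rw [show (2:ℝ) = ((2:ℕ):ℝ) by norm_num, Real.rpow_natCast]

lemma gaussianPDFReal_zero_mean (v : ℝ≥0) (x : ℝ) :
    gaussianPDFReal 0 v x = (√(2 * π * v))⁻¹ * rexp (-(2 * (v:ℝ))⁻¹ * x ^ 2) := by
  rw [gaussianPDFReal]
  congr 2
  rw [sub_zero]
  field_simp

lemma integrable_sq_mul_pdf {v : ℝ≥0} (hv : v ≠ 0) :
    Integrable (fun x : ℝ => gaussianPDFReal 0 v x * x ^ 2) := by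
  have hv0 : (0:ℝ) < v := lt_of_le_of_ne v.2 (by exact_mod_cast hv.symm)
  have hb : (0:ℝ) < (2 * (v:ℝ))⁻¹ := by positivity
  have I := (integrable_rpow_mul_exp_neg_mul_sq hb (s := 2) (by norm_num)).const_mul
    ((√(2 * π * v))⁻¹)
  refine I.congr (Filter.Eventually.of_forall fun x => ?_)
  simp only [gaussianPDFReal_zero_mean, rpow_two_eq]
  ring

lemma gaussianReal_eq_withDensity {v : ℝ≥0} (hv : v ≠ 0) :
    gaussianReal 0 v
      = volume.withDensity (fun x => ((gaussianPDFReal 0 v x).toNNReal : ℝ≥0∞)) := by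
  rw [gaussianReal_of_var_ne_zero 0 hv]
  rfl

lemma meas_pdf_toNNReal (v : ℝ≥0) :
    Measurable (fun x => (gaussianPDFReal 0 v x).toNNReal) :=
  (measurable_gaussianPDFReal 0 v).real_toNNReal

lemma integrable_sq_gaussianReal {v : ℝ≥0} (hv : v ≠ 0) :
    Integrable (fun x : ℝ => x ^ 2) (gaussianReal 0 v) := by
  rw [gaussianReal_eq_withDensity hv]
  refine (integrable_withDensity_iff_integrable_smul (meas_pdf_toNNReal v)).mpr ?_
  refine (integrable_sq_mul_pdf hv).congr (Filter.Eventually.of_forall fun x => ?_)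
  simp only [NNReal.smul_def, smul_eq_mul]
  rw [Real.coe_toNNReal _ (gaussianPDFReal_nonneg 0 v x)]

lemma integral_sq_exp_neg_mul_sq {c : ℝ} (hc : 0 < c) :
    ∫ x : ℝ, x ^ 2 * rexp (-c * x ^ 2) = c ^ (-(3:ℝ)/2) * (√π / 2) := by
  have h1 : ∫ x : ℝ, x ^ 2 * rexp (-c * x ^ 2)
      = 2 * ∫ x in Ioi (0:ℝ), x ^ 2 * rexp (-c * x ^ 2) := by
    rw [← integral_comp_abs (f := fun x => x ^ 2 * rexp (-c * x ^ 2))]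
    congr 1 with x
    rw [sq_abs]
  have h2 : ∫ x in Ioi (0:ℝ), x ^ 2 * rexp (-c * x ^ 2)
      = c ^ (-(2+1)/2 : ℝ) * (1/2) * Real.Gamma ((2+1)/2) := by
    rw [← integral_rpow_mul_exp_neg_mul_rpow (p := 2) (q := 2) two_pos (by norm_num) hc]
    refine setIntegral_congr_fun measurableSet_Ioi fun x hx => ?_
    rw [rpow_two_eq]
  have hGamma : Real.Gamma ((2+1)/2 : ℝ) = √π / 2 := by
    rw [show ((2+1)/2 : ℝ) = 1/2 + 1 by norm_num, Real.Gamma_add_one (by norm_num),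
      Real.Gamma_one_half_eq]
    ring
  rw [h1, h2, hGamma, show (-(2+1)/2 : ℝ) = -(3:ℝ)/2 by norm_num]
  ring

lemma integral_sq_gaussianReal {v : ℝ≥0} (hv : v ≠ 0) :
    ∫ x, x ^ 2 ∂(gaussianReal 0 v) = v := by
  have hv0 : (0:ℝ) < v := lt_of_le_of_ne v.2 (by exact_mod_cast hv.symm)
  have h2v : (0:ℝ) < 2 * v := by positivity
  have hc : (0:ℝ) < (2 * (v:ℝ))⁻¹ := by positivity
  rw [gaussianReal_eq_withDensity hv, integral_withDensity_eq_integral_smul (meas_pdf_toNNReal v)]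
  have h0 : ∫ x : ℝ, (gaussianPDFReal 0 v x).toNNReal • x ^ 2
      = ∫ x : ℝ, (√(2 * π * v))⁻¹ * (x ^ 2 * rexp (-(2 * (v:ℝ))⁻¹ * x ^ 2)) := by
    congr 1 with x
    rw [NNReal.smul_def, smul_eq_mul, Real.coe_toNNReal _ (gaussianPDFReal_nonneg 0 v x),
      gaussianPDFReal_zero_mean]
    ring
  rw [h0, integral_const_mul, integral_sq_exp_neg_mul_sq hc]
  have h3 : ((2 * (v:ℝ))⁻¹) ^ (-(3:ℝ)/2) = (2 * v) * √(2 * v) := by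
    rw [show (-(3:ℝ)/2) = -((3:ℝ)/2) by ring, Real.inv_rpow h2v.le, Real.rpow_neg h2v.le, inv_inv,
      show ((3:ℝ)/2) = 1 + 1/2 by norm_num, Real.rpow_add h2v, Real.rpow_one,
      ← Real.sqrt_eq_rpow]
  have h4 : √(2 * π * (v:ℝ)) = √(2 * v) * √π := by
    rw [show 2 * π * (v:ℝ) = (2 * v) * π by ring, Real.sqrt_mul h2v.le]
  rw [h3, h4]
  have hs : 0 < √(2 * (v:ℝ)) := Real.sqrt_pos.mpr h2v
  have hp : 0 < √π := Real.sqrt_pos.mpr Real.pi_pos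
  field_simp

lemma gaussianReal_map_neg' (v : ℝ≥0) :
    (gaussianReal 0 v).map (fun x => -x) = gaussianReal 0 v := by
  have h := gaussianReal_map_const_mul (μ := 0) (v := v) (-1)
  simp only [neg_one_mul, mul_zero] at h
  rw [h]
  congr 1
  ext
  norm_num

lemma integral_mul_abs_gaussianReal (v : ℝ≥0) :
    ∫ x, x * |x| ∂(gaussianReal 0 v) = 0 := by
  set μ := gaussianReal 0 v
  have hmeas : AEStronglyMeasurable (fun x : ℝ => x * |x|)
      ((gaussianReal 0 v).map (fun x => -x)) :=
    (continuous_id.mul continuous_abs).aestronglyMeasurable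
  have h1 : ∫ x, x * |x| ∂μ = ∫ x, (-x) * |(-x)| ∂μ := by
    conv_lhs => rw [show μ = (gaussianReal 0 v).map (fun x => -x) from (gaussianReal_map_neg' v).symm]
    rw [integral_map measurable_neg.aemeasurable hmeas]
  have h2 : ∫ x, (-x) * |(-x)| ∂μ = - ∫ x, x * |x| ∂μ := by
    rw [← integral_neg]
    congr 1 with x
    rw [abs_neg]
    ring
  have := h1.trans h2
  linarith

/-- If `σ(0) = 0`, `σ'(0) = 1`, `σ'` is bounded and `σ'(z) → a` as `z → -∞`,
`σ'(z) → b` as `z → +∞`, then for any `x₀ > 0`,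
`lim_{ε → ∞} E_{u ~ N(0, x₀²)} [(σ(εu)/ε)²] = ((a² + b²)/2) x₀²`. -/
theorem gaussian_second_moment_limit_atTop (σ : ℝ → ℝ) (a b C : ℝ)
    (h0 : σ 0 = 0) (hdiff : Differentiable ℝ σ) (h1 : deriv σ 0 = 1)
    (hbd : ∀ z, |deriv σ z| ≤ C)
    (ha : Tendsto (deriv σ) atBot (nhds a)) (hb : Tendsto (deriv σ) atTop (nhds b))
    (x₀ : ℝ) (hx : 0 < x₀) :
    Tendsto (fun ε : ℝ => ∫ u, (σ (ε * u) / ε) ^ 2 ∂(gaussianReal 0 ((x₀ ^ 2).toNNReal)))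
      atTop (nhds (((a ^ 2 + b ^ 2) / 2) * x₀ ^ 2)) := by
  set v : ℝ≥0 := (x₀ ^ 2).toNNReal with hv
  have hvne : v ≠ 0 := by
    simp only [hv, ne_eq, Real.toNNReal_eq_zero, not_le]
    positivity
  have hvcoe : (v:ℝ) = x₀ ^ 2 := Real.coe_toNNReal _ (sq_nonneg x₀)
  set μ := gaussianReal 0 v with hμ
  have hC0 : (0:ℝ) ≤ C := le_trans (abs_nonneg _) (hbd 0)
  -- Lipschitz bound: |σ z| ≤ C * |z|
  have hlip : ∀ z, |σ z| ≤ C * |z| := by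
    have hl : LipschitzWith C.toNNReal σ := by
      refine lipschitzWith_of_nnnorm_deriv_le hdiff fun x => ?_
      rw [← NNReal.coe_le_coe, coe_nnnorm, Real.norm_eq_abs, Real.coe_toNNReal _ hC0]
      exact hbd x
    intro z
    have := hl.dist_le_mul z 0
    rwa [Real.dist_eq, Real.dist_eq, h0, sub_zero, sub_zero, Real.coe_toNNReal _ hC0] at this
  -- pointwise limit
  have hpt : ∀ u : ℝ, Tendsto (fun ε : ℝ => (σ (ε * u) / ε) ^ 2) atTop
      (nhds (if u < 0 then a ^ 2 * u ^ 2 else b ^ 2 * u ^ 2)) := by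
    intro u
    rcases lt_trichotomy u 0 with hu | hu | hu
    · rw [if_pos hu]
      have h2 : Tendsto (fun ε : ℝ => σ (ε * u) / (ε * u)) atTop (nhds a) :=
        (slope_tendsto_atBot' σ a hdiff ha).comp (Tendsto.atTop_mul_const_of_neg hu tendsto_id)
      have h3 : Tendsto (fun ε : ℝ => σ (ε * u) / ε) atTop (nhds (a * u)) := by
        have h4 := h2.mul_const u
        refine Tendsto.congr' ?_ h4
        filter_upwards [eventually_gt_atTop (0:ℝ)] with ε hε
        have hune : u ≠ 0 := ne_of_lt hu
        field_simp
      have := h3.pow 2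
      convert this using 2
      ring
    · subst hu
      simp only [mul_zero, h0, lt_irrefl, if_false, zero_div, zero_pow]
      simpa using tendsto_const_nhds
    · rw [if_neg (not_lt.mpr hu.le)]
      have h2 : Tendsto (fun ε : ℝ => σ (ε * u) / (ε * u)) atTop (nhds b) :=
        (slope_tendsto_atTop' σ b hdiff hb).comp (Tendsto.atTop_mul_const hu tendsto_id)
      have h3 : Tendsto (fun ε : ℝ => σ (ε * u) / ε) atTop (nhds (b * u)) := by
        have h4 := h2.mul_const u
        refine Tendsto.congr' ?_ h4
        filter_upwards [eventually_gt_atTop (0:ℝ)] with ε hε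
        have hune : u ≠ 0 := ne_of_gt hu
        field_simp
      have := h3.pow 2
      convert this using 2
      ring
  -- dominated convergence
  have hint : Integrable (fun u : ℝ => u ^ 2) μ := integrable_sq_gaussianReal hvne
  have hmain : Tendsto (fun ε : ℝ => ∫ u, (σ (ε * u) / ε) ^ 2 ∂μ) atTop
      (nhds (∫ u, (if u < 0 then a ^ 2 * u ^ 2 else b ^ 2 * u ^ 2) ∂μ)) := by
    refine tendsto_integral_filter_of_dominated_convergence (fun u => C ^ 2 * u ^ 2) ?_ ?_ ?_ ?_
    · exact Eventually.of_forall fun ε =>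
        (((hdiff.continuous.comp (continuous_const.mul continuous_id)).div_const ε).pow 2).aestronglyMeasurable
    · filter_upwards [eventually_ge_atTop (1:ℝ)] with ε hε
      refine Eventually.of_forall fun u => ?_
      have hε0 : (0:ℝ) < ε := lt_of_lt_of_le one_pos hε
      have h5 : |σ (ε * u) / ε| ≤ C * |u| := by
        rw [abs_div, abs_of_pos hε0, div_le_iff₀ hε0]
        calc |σ (ε * u)| ≤ C * |ε * u| := hlip _
          _ = C * |u| * ε := by rw [abs_mul, abs_of_pos hε0]; ring
      have h6 := pow_le_pow_left₀ (abs_nonneg _) h5 2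
      rw [Real.norm_eq_abs, abs_of_nonneg (sq_nonneg _)]
      calc (σ (ε * u) / ε) ^ 2 = |σ (ε * u) / ε| ^ 2 := (sq_abs _).symm
        _ ≤ (C * |u|) ^ 2 := h6
        _ = C ^ 2 * u ^ 2 := by rw [mul_pow, sq_abs]
    · exact hint.const_mul _
    · exact Eventually.of_forall hpt
  -- compute the limit integral
  have hsplit : (fun u : ℝ => if u < 0 then a ^ 2 * u ^ 2 else b ^ 2 * u ^ 2)
      = fun u : ℝ => ((a ^ 2 + b ^ 2) / 2) * u ^ 2 + ((b ^ 2 - a ^ 2) / 2) * (u * |u|) := by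
    ext u
    rcases lt_or_ge u 0 with hu | hu
    · rw [if_pos hu, abs_of_neg hu]; ring
    · rw [if_neg (not_lt.mpr hu), abs_of_nonneg hu]; ring
  have hint2 : Integrable (fun u : ℝ => u * |u|) μ := by
    refine hint.mono ((continuous_id.mul continuous_abs).aestronglyMeasurable) ?_
    refine Eventually.of_forall fun u => ?_
    simp only [Real.norm_eq_abs, abs_mul, abs_abs]
    rw [abs_of_nonneg (sq_nonneg u), pow_two, ← abs_mul_abs_self u]
  have hval : ∫ u, (if u < 0 then a ^ 2 * u ^ 2 else b ^ 2 * u ^ 2) ∂μ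
      = ((a ^ 2 + b ^ 2) / 2) * x₀ ^ 2 := by
    rw [hsplit, integral_add ((hint.const_mul _)) ((hint2.const_mul _)),
      integral_const_mul, integral_const_mul, integral_sq_gaussianReal hvne,
      integral_mul_abs_gaussianReal, hvcoe]
    ring
  rw [← hval]
  exact hmain
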